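/- Consider the WARM complete graph on n_v ≥ 3 vertices, with n = n_v(n_v−1)/2 colours. The point (1/n, …, 1/n) is an equilibrium; it is linearly stable if and only if n_v = 3 and α < 4/3, critical if and only if n_v = 3 and α = 4/3, and linearly unstable in all other cases. In particular, for every n_v ≥ 4, the value α − 1 > 0 is an eigenvalue of D(1/n,…,1/n) of multiplicity at least n − n_v, so (1/n,…,1/n) is linearly unstable. -/

import Mathlib

open Finset

noncomputable section

/-- Membership in the simplex `Δ`. -/
def InSimplex {ι : Type*} [Fintype ι] (v : ι → ℝ) : Prop :=
  (∀ i, 0 ≤ v i) ∧ ∑ i, v i = 1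

/-- A WARM weight: a probability distribution on the subsets of the colour set,
giving no mass to the empty set. -/
def IsWarmWeight {ι : Type*} [Fintype ι] [DecidableEq ι] (p : Finset ι → ℝ) : Prop :=
  p ∅ = 0 ∧ (∀ A, 0 ≤ p A ∧ p A ≤ 1) ∧ ∑ A : Finset ι, p A = 1

/-- The WARM vector field `F`. -/
def warmF {ι : Type*} [Fintype ι] [DecidableEq ι] (α : ℝ) (p : Finset ι → ℝ)
    (v : ι → ℝ) (i : ι) : ℝ :=
  -v i + ∑ A ∈ Finset.univ.filter (fun A : Finset ι => i ∈ A),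
      p A * v i ^ α / (∑ j ∈ A, v j ^ α)

/-- The Jacobian matrix `D(v)`. -/
def warmD {ι : Type*} [Fintype ι] [DecidableEq ι] (α : ℝ) (p : Finset ι → ℝ)
    (v : ι → ℝ) : Matrix ι ι ℝ :=
  Matrix.of fun i k =>
    if i = k then
      -1 + α * v i ^ (α - 1) *
        ∑ A ∈ Finset.univ.filter (fun A : Finset ι => i ∈ A),
          p A * ((∑ j ∈ A, v j ^ α) - v i ^ α) / (∑ j ∈ A, v j ^ α) ^ 2
    else
      -(α * v k ^ (α - 1) * v i ^ α *
        ∑ A ∈ Finset.univ.filter (fun A : Finset ι => i ∈ A ∧ k ∈ A),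
          p A / (∑ j ∈ A, v j ^ α) ^ 2)

/-- `μ ∈ ℂ` is an eigenvalue of the real matrix `M`, i.e. a root of its
characteristic polynomial. -/
def IsEigenvalue {ι : Type*} [Fintype ι] [DecidableEq ι] (M : Matrix ι ι ℝ) (μ : ℂ) : Prop :=
  (M.charpoly.map (algebraMap ℝ ℂ)).IsRoot μ

/-- Linear stability: every complex eigenvalue has negative real part. -/
def LinStable {ι : Type*} [Fintype ι] [DecidableEq ι] (M : Matrix ι ι ℝ) : Prop :=
  ∀ μ : ℂ, IsEigenvalue M μ → μ.re < 0

/-- Linear instability: some eigenvalue has positive real part. -/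
def LinUnstable {ι : Type*} [Fintype ι] [DecidableEq ι] (M : Matrix ι ι ℝ) : Prop :=
  ∃ μ : ℂ, IsEigenvalue M μ ∧ 0 < μ.re

/-- Critical: neither linearly stable nor linearly unstable. -/
def CriticalPt {ι : Type*} [Fintype ι] [DecidableEq ι] (M : Matrix ι ι ℝ) : Prop :=
  ¬ LinStable M ∧ ¬ LinUnstable M


/-- The edges of the complete graph on `nv` vertices. -/
abbrev CompleteEdge (nv : ℕ) := {e : Sym2 (Fin nv) // ¬ e.IsDiag}

/-- The set of edges incident to the vertex `x`. -/
def incidentEdges (nv : ℕ) (x : Fin nv) : Finset (CompleteEdge nv) :=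
  Finset.univ.filter (fun e => x ∈ e.1)

/-- The WARM weight of the complete graph on `nv` vertices: each vertex `x` contributes
mass `1/nv` to the set `A_x` of edges incident to `x`. -/
def completeP (nv : ℕ) : Finset (CompleteEdge nv) → ℝ :=
  fun A =>
    ((Finset.univ.filter (fun x : Fin nv => A = incidentEdges nv x)).card : ℝ) / (nv : ℝ)

open Matrix Polynomial

/-! At the barycentre all the sums `∑_{j ∈ A} v_j^α` are equal, and the Jacobian becomes
`(α - 1) I - α / (2 (n_v - 1)) NᵀN`, where `N` is the vertex–edge incidence matrix of
`K_{n_v}`. Since `N Nᵀ = (n_v - 2) I + J`, the spectrum of `NᵀN` is `2 (n_v - 1)` (once), `n_v - 2`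
(`n_v - 1` times) and `0` (`n - n_v` times). So `D` has the eigenvalues `-1`,
`α n_v / (2 (n_v - 1)) - 1` and, as soon as `n > n_v`, i.e. `n_v ≥ 4`, also `α - 1 > 0`;
for `n_v = 3` everything hinges on the sign of `3α/4 - 1`. -/

namespace Matrix

variable {m n R : Type*} [Fintype m] [DecidableEq m] [Fintype n] [DecidableEq n] [CommRing R]

theorem charpoly_add_scalar (M : Matrix n n R) (μ : R) :
    (M + scalar n μ).charpoly = M.charpoly.comp (X - C μ) := by
  rw [← add_sub_cancel_right M (scalar n μ), charpoly_sub_scalar, comp_assoc,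
    add_sub_cancel_right]
  simp

theorem charpoly_scalar_add_vecMulVec [Nonempty n] (a : R) (u v : n → R) :
    (scalar n a + vecMulVec u v).charpoly
      = (X - C a) ^ (Fintype.card n - 1) * (X - C (a + u ⬝ᵥ v)) := by
  obtain ⟨k, hk⟩ : ∃ k, Fintype.card n = k + 1 := Nat.exists_eq_add_one.mpr Fintype.card_pos
  rw [add_comm, charpoly_add_scalar, charpoly_vecMulVec, hk, Nat.add_sub_cancel]
  simp only [sub_comp, mul_comp, X_comp, C_comp, X_pow_comp, smul_eq_C_mul, pow_succ, C_add]
  ring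

theorem charpoly_scalar_sub_smul_transpose_mul [Nonempty m] (N : Matrix m n R) (a s β : R)
    (hN : N * Nᵀ = scalar m a + vecMulVec 1 1) (hmn : Fintype.card m ≤ Fintype.card n) :
    (scalar n s - β • (Nᵀ * N)).charpoly
      = (X - C s) ^ (Fintype.card n - Fintype.card m)
        * ((X - C (s - β * a)) ^ (Fintype.card m - 1)
          * (X - C (s - β * (a + Fintype.card m)))) := by
  have hsplit : scalar n s - β • (Nᵀ * N) = (-β • Nᵀ) * N + scalar n s := by
    rw [smul_mul, neg_smul]; abel
  have hswap : N * (-β • Nᵀ) = scalar m (-β * a) + vecMulVec (fun _ => -β) 1 := by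
    rw [Matrix.mul_smul, hN, smul_add]
    congr 1
    · ext i j; simp [scalar_apply, diagonal_apply]
    · ext i j; simp [vecMulVec_apply]
  rw [hsplit, charpoly_add_scalar, charpoly_mul_comm_of_le _ _ hmn, hswap,
    charpoly_scalar_add_vecMulVec]
  simp only [mul_comp, pow_comp, sub_comp, add_comp, neg_comp, natCast_comp, X_comp, C_comp,
    dotProduct, Pi.one_apply, mul_one, sum_const, card_univ, nsmul_eq_mul, map_sub, map_add,
    map_mul, map_neg, map_natCast]
  ring

end Matrix

def barycentre (ι : Type*) [Fintype ι] : ι → ℝ := fun _ => 1 / Fintype.card ι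

section ConstantPoint

variable {ι : Type*} [Fintype ι] [DecidableEq ι] (α : ℝ) (p : Finset ι → ℝ) {c : ℝ}

theorem warmF_const (hc : 0 < c) (i : ι) :
    warmF α p (fun _ => c) i = -c + ∑ A ∈ univ.filter (i ∈ ·), p A / #A := by
  have hcα : c ^ α ≠ 0 := (Real.rpow_pos_of_pos hc α).ne'
  simp only [warmF, sum_const, nsmul_eq_mul]
  congr 1
  refine sum_congr rfl fun A _ => ?_
  rw [mul_div_mul_right _ _ hcα]

theorem warmD_const (hc : 0 < c) :
    warmD α p (fun _ => c) = of fun i k =>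
      if i = k then -1 + α / c * ∑ A ∈ univ.filter (i ∈ ·), p A * (#A - 1) / #A ^ 2
      else -(α / c * ∑ A ∈ univ.filter (fun A => i ∈ A ∧ k ∈ A), p A / #A ^ 2) := by
  have hpow : c ^ (α - 1) = c ^ α / c := Real.rpow_sub_one hc.ne' α
  ext i k
  simp only [warmD, of_apply, sum_const, nsmul_eq_mul, hpow, mul_sum]
  split_ifs <;> congr 1 <;> refine sum_congr rfl fun A _ => ?_ <;> field_simp

end ConstantPoint

section CompleteGraph

variable {nv : ℕ}

theorem card_completeEdge (nv : ℕ) : Fintype.card (CompleteEdge nv) = nv.choose 2 := by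
  rw [Sym2.card_subtype_not_diag, Fintype.card_fin]

theorem cast_card_completeEdge (nv : ℕ) :
    (Fintype.card (CompleteEdge nv) : ℝ) = nv * (nv - 1) / 2 := by
  rw [card_completeEdge, Nat.cast_choose_two]

theorem le_card_completeEdge (hnv : 3 ≤ nv) : nv ≤ Fintype.card (CompleteEdge nv) := by
  have h : (3 : ℝ) ≤ nv := by exact_mod_cast hnv
  rw [← Nat.cast_le (α := ℝ), cast_card_completeEdge]
  nlinarith

theorem card_completeEdge_sub_ne_zero_iff (hnv : 3 ≤ nv) :
    Fintype.card (CompleteEdge nv) - nv ≠ 0 ↔ 4 ≤ nv := by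
  have h : (3 : ℝ) ≤ nv := by exact_mod_cast hnv
  rw [Ne, Nat.sub_eq_zero_iff_le, not_le, ← Nat.cast_lt (α := ℝ), cast_card_completeEdge]
  constructor
  · intro hlt
    by_contra! h4
    have : (nv : ℝ) = 3 := by exact_mod_cast (by omega : nv = 3)
    rw [this] at hlt
    norm_num at hlt
  · intro h4
    have : (4 : ℝ) ≤ nv := by exact_mod_cast h4
    nlinarith

theorem card_filter_mem_mem {x y : Fin nv} (hxy : x ≠ y) :
    #{e : CompleteEdge nv | x ∈ e.1 ∧ y ∈ e.1} = 1 := by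
  rw [card_eq_one]
  refine ⟨⟨s(x, y), by simpa using hxy⟩, ?_⟩
  ext e
  simp [Subtype.ext_iff, Sym2.mem_and_mem_iff hxy]

theorem card_incidentEdges (x : Fin nv) : #(incidentEdges nv x) = nv - 1 := by
  have hcard : #(univ.erase x) = nv - 1 := by simp
  rw [← hcard]
  symm
  refine card_bij (fun y hy => ⟨s(x, y), by simpa [eq_comm] using (mem_erase.1 hy).1⟩) ?_ ?_ ?_
  · intro y _
    simp [incidentEdges]
  · intro y _ z _ h
    exact Sym2.congr_right.1 (Subtype.ext_iff.1 h)
  · rintro ⟨e, he⟩ hx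
    replace hx : x ∈ e := by simpa [incidentEdges] using hx
    exact ⟨Sym2.Mem.other hx, mem_erase.2 ⟨Sym2.other_ne he hx, mem_univ _⟩,
      Subtype.ext (Sym2.other_spec hx)⟩

theorem card_filter_mem_incidentEdges (e : CompleteEdge nv) :
    #{x | e ∈ incidentEdges nv x} = 2 := by
  have : ({x | e ∈ incidentEdges nv x} : Finset (Fin nv)) = e.1.toFinset := by
    ext x; simp [incidentEdges]
  rw [this, Sym2.card_toFinset_of_not_isDiag _ e.2]

theorem sum_completeP_mul (P : Finset (CompleteEdge nv) → Prop) [DecidablePred P]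
    (g : ℕ → ℝ) :
    ∑ A ∈ univ.filter P, completeP nv A * g #A
      = #{x | P (incidentEdges nv x)} * g (nv - 1) / nv := by
  simp only [completeP, card_filter, Nat.cast_sum, Nat.cast_ite, Nat.cast_one, Nat.cast_zero,
    sum_div, sum_mul]
  rw [sum_comm]
  simp only [ite_div, ite_mul, zero_div, zero_mul, sum_ite_eq', mem_filter, mem_univ, true_and]
  refine sum_congr rfl fun x _ => ?_
  split_ifs
  · rw [card_incidentEdges]
    ring
  · rfl

def completeIncidence (nv : ℕ) : Matrix (Fin nv) (CompleteEdge nv) ℝ :=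
  of fun x e => if x ∈ e.1 then 1 else 0

theorem completeIncidence_mul_transpose :
    completeIncidence nv * (completeIncidence nv)ᵀ
      = scalar (Fin nv) ((nv : ℝ) - 2) + vecMulVec 1 1 := by
  ext x y
  simp only [mul_apply, transpose_apply, completeIncidence, of_apply, mul_ite, mul_one, mul_zero,
    ← ite_and, sum_boole, Matrix.add_apply, scalar_apply, diagonal_apply, vecMulVec_apply,
    Pi.one_apply]
  by_cases hxy : x = y
  · subst hxy
    have hA : ({e | x ∈ e.1 ∧ x ∈ e.1} : Finset (CompleteEdge nv)) = incidentEdges nv x := by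
      ext e; simp [incidentEdges]
    rw [hA, card_incidentEdges, Nat.cast_sub x.pos]
    simp only [if_true, Nat.cast_one]
    ring
  · simp [hxy, card_filter_mem_mem (Ne.symm hxy)]

theorem transpose_completeIncidence_mul_apply (e f : CompleteEdge nv) :
    ((completeIncidence nv)ᵀ * completeIncidence nv) e f
      = #{x | e ∈ incidentEdges nv x ∧ f ∈ incidentEdges nv x} := by
  simp [mul_apply, completeIncidence, ← ite_and, sum_boole, incidentEdges, and_comm]

end CompleteGraph

section Barycentre

variable {nv : ℕ}

theorem warmF_completeP_barycentre (hnv : 2 ≤ nv) (α : ℝ) (e : CompleteEdge nv) :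
    warmF α (completeP nv) (barycentre _) e = 0 := by
  have hn := cast_card_completeEdge nv
  have hnv' : (2 : ℝ) ≤ nv := by exact_mod_cast hnv
  have hnv1 : (nv : ℝ) - 1 ≠ 0 := by linarith
  have hpos : (0 : ℝ) < 1 / Fintype.card (CompleteEdge nv) := by
    rw [hn]; apply one_div_pos.2; nlinarith
  unfold barycentre
  rw [warmF_const α _ hpos]
  simp only [div_eq_mul_inv (completeP nv _)]
  rw [sum_completeP_mul _ (fun k => (k : ℝ)⁻¹), card_filter_mem_incidentEdges,
    Nat.cast_sub (by omega : 1 ≤ nv), Nat.cast_one, hn]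
  field_simp
  ring

theorem warmD_completeP_barycentre (hnv : 2 ≤ nv) (α : ℝ) :
    warmD α (completeP nv) (barycentre _)
      = scalar _ (α - 1) - (α / (2 * (nv - 1))) •
          ((completeIncidence nv)ᵀ * completeIncidence nv) := by
  have hn := cast_card_completeEdge nv
  have hnv' : (2 : ℝ) ≤ nv := by exact_mod_cast hnv
  have hnv1 : (nv : ℝ) - 1 ≠ 0 := by linarith
  have hpos : (0 : ℝ) < 1 / Fintype.card (CompleteEdge nv) := by
    rw [hn]; apply one_div_pos.2; nlinarith
  unfold barycentre
  rw [warmD_const α _ hpos]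
  ext e f
  simp only [of_apply, Matrix.sub_apply, Matrix.smul_apply, scalar_apply, diagonal_apply,
    transpose_completeIncidence_mul_apply, smul_eq_mul]
  split_ifs with hef
  · subst hef
    simp only [mul_div_assoc, and_self, card_filter_mem_incidentEdges]
    rw [sum_completeP_mul _ (fun k => ((k : ℝ) - 1) / k ^ 2), card_filter_mem_incidentEdges,
      Nat.cast_sub (by omega : 1 ≤ nv), Nat.cast_one, hn]
    field_simp
    ring
  · simp only [div_eq_mul_inv (completeP nv _)]
    rw [sum_completeP_mul _ (fun k => ((k : ℝ) ^ 2)⁻¹), Nat.cast_sub (by omega : 1 ≤ nv),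
      Nat.cast_one, hn]
    field_simp
    ring

end Barycentre

section Stability

variable {ι : Type*} [Fintype ι] [DecidableEq ι] {M : Matrix ι ι ℝ}

theorem LinUnstable.not_linStable (h : LinUnstable M) : ¬ LinStable M := by
  obtain ⟨μ, hμ, hpos⟩ := h
  exact fun hS => (hS μ hμ).not_gt hpos

theorem LinUnstable.not_criticalPt (h : LinUnstable M) : ¬ CriticalPt M := fun hc => hc.2 h

variable {a b : ℝ}

theorem linStable_iff_of_isEigenvalue_iff (hM : ∀ μ, IsEigenvalue M μ ↔ μ = a ∨ μ = b)
    (hb : b < 0) : LinStable M ↔ a < 0 := by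
  refine ⟨fun hS => by simpa using hS a ((hM a).2 (Or.inl rfl)), fun ha μ hμ => ?_⟩
  rcases (hM μ).1 hμ with rfl | rfl <;> simpa

theorem linUnstable_iff_of_isEigenvalue_iff (hM : ∀ μ, IsEigenvalue M μ ↔ μ = a ∨ μ = b)
    (hb : b < 0) : LinUnstable M ↔ 0 < a := by
  refine ⟨fun ⟨μ, hμ, hpos⟩ => ?_, fun ha => ⟨a, (hM a).2 (Or.inl rfl), by simpa⟩⟩
  rcases (hM μ).1 hμ with rfl | rfl
  · simpa using hpos
  · exact absurd hpos (by simpa using hb.le)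

theorem criticalPt_iff_of_isEigenvalue_iff (hM : ∀ μ, IsEigenvalue M μ ↔ μ = a ∨ μ = b)
    (hb : b < 0) : CriticalPt M ↔ a = 0 := by
  rw [CriticalPt, linStable_iff_of_isEigenvalue_iff hM hb,
    linUnstable_iff_of_isEigenvalue_iff hM hb, not_lt, not_lt, le_antisymm_iff, and_comm]

end Stability

section Spectrum

variable {nv : ℕ}

theorem charpoly_warmD_completeP_barycentre (hnv : 3 ≤ nv) (α : ℝ) :
    (warmD α (completeP nv) (barycentre _)).charpoly
      = (X - C (α - 1)) ^ (Fintype.card (CompleteEdge nv) - nv)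
        * ((X - C (α * nv / (2 * (nv - 1)) - 1)) ^ (nv - 1) * (X - C (-1))) := by
  have : NeZero nv := ⟨by omega⟩
  have hnv1 : (nv : ℝ) - 1 ≠ 0 := by
    have : (3 : ℝ) ≤ nv := by exact_mod_cast hnv
    linarith
  rw [warmD_completeP_barycentre (by omega),
    charpoly_scalar_sub_smul_transpose_mul _ _ _ _ completeIncidence_mul_transpose
      (by simpa using le_card_completeEdge hnv), Fintype.card_fin]
  congr 4
  · congr 1
    field_simp
    ring
  · field_simp
    ring

theorem isEigenvalue_warmD_completeP_barycentre_iff (hnv : 3 ≤ nv) (α : ℝ) (μ : ℂ) :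
    IsEigenvalue (warmD α (completeP nv) (barycentre _)) μ ↔
      (4 ≤ nv ∧ μ = ↑(α - 1)) ∨ μ = ↑(α * nv / (2 * (nv - 1)) - 1) ∨ μ = -1 := by
  rw [IsEigenvalue, charpoly_warmD_completeP_barycentre hnv,
    ← card_completeEdge_sub_ne_zero_iff hnv]
  simp only [Polynomial.map_mul, Polynomial.map_pow, Polynomial.map_sub, map_X, map_C, IsRoot.def,
    eval_mul, eval_pow, eval_sub, eval_X, eval_C, mul_eq_zero, pow_eq_zero_iff', sub_eq_zero,
    ne_eq, Complex.coe_algebraMap]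
  have hnv1 : nv - 1 ≠ 0 := by omega
  rw [Complex.ofReal_neg, Complex.ofReal_one]
  tauto

theorem linUnstable_warmD_completeP_barycentre (h4 : 4 ≤ nv) {α : ℝ} (hα : 1 < α) :
    LinUnstable (warmD α (completeP nv) (barycentre _)) :=
  ⟨_, (isEigenvalue_warmD_completeP_barycentre_iff (by omega) α _).2 (Or.inl ⟨h4, rfl⟩),
    by simpa using hα⟩

theorem isEigenvalue_warmD_completeP_three_barycentre_iff (α : ℝ) (μ : ℂ) :
    IsEigenvalue (warmD α (completeP 3) (barycentre _)) μ
      ↔ μ = ↑(3 * α / 4 - 1) ∨ μ = ↑(-1 : ℝ) := by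
  rw [isEigenvalue_warmD_completeP_barycentre_iff le_rfl]
  norm_num
  ring_nf

end Spectrum

/-- **The barycentre of the WARM complete graph.**
With `n = nv(nv−1)/2` colours, `(1/n,…,1/n)` is an equilibrium; it is linearly stable
iff `nv = 3` and `α < 4/3`, critical iff `nv = 3` and `α = 4/3`, and linearly unstable
in all other cases.  For `nv ≥ 4`, `α − 1 > 0` is an eigenvalue of the Jacobian with
multiplicity at least `n − nv`, so the barycentre is linearly unstable. -/
theorem complete_graph_barycentre (nv : ℕ) (hnv : 3 ≤ nv) (α : ℝ) (hα : 1 < α) :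
    Fintype.card (CompleteEdge nv) = nv * (nv - 1) / 2 ∧
    (∀ i, warmF α (completeP nv)
        (fun _ => 1 / (Fintype.card (CompleteEdge nv) : ℝ)) i = 0) ∧
    (LinStable (warmD α (completeP nv)
        (fun _ => 1 / (Fintype.card (CompleteEdge nv) : ℝ))) ↔ nv = 3 ∧ α < 4 / 3) ∧
    (CriticalPt (warmD α (completeP nv)
        (fun _ => 1 / (Fintype.card (CompleteEdge nv) : ℝ))) ↔ nv = 3 ∧ α = 4 / 3) ∧
    (LinUnstable (warmD α (completeP nv)
        (fun _ => 1 / (Fintype.card (CompleteEdge nv) : ℝ))) ↔ ¬ (nv = 3 ∧ α ≤ 4 / 3)) ∧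
    (4 ≤ nv →
      ((Polynomial.X - Polynomial.C (α - 1)) ^ (Fintype.card (CompleteEdge nv) - nv) ∣
        (warmD α (completeP nv)
          (fun _ => 1 / (Fintype.card (CompleteEdge nv) : ℝ))).charpoly) ∧
      LinUnstable (warmD α (completeP nv)
        (fun _ => 1 / (Fintype.card (CompleteEdge nv) : ℝ)))) := by
  refine ⟨(card_completeEdge nv).trans (Nat.choose_two_right nv),
    warmF_completeP_barycentre (by omega) α, ?_⟩
  obtain rfl | h4 : nv = 3 ∨ 4 ≤ nv := by omega
  · have hM := isEigenvalue_warmD_completeP_three_barycentre_iff α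
    have hb : (-1 : ℝ) < 0 := by norm_num
    refine ⟨(linStable_iff_of_isEigenvalue_iff hM hb).trans ?_,
      (criticalPt_iff_of_isEigenvalue_iff hM hb).trans ?_,
      (linUnstable_iff_of_isEigenvalue_iff hM hb).trans ?_, by omega⟩
    · exact ⟨fun h => ⟨rfl, by linarith⟩, fun h => by linarith [h.2]⟩
    · exact ⟨fun h => ⟨rfl, by linarith⟩, fun h => by rw [h.2]; norm_num⟩
    · exact ⟨fun h h' => by linarith [h'.2],
        fun h => by by_contra hle; exact h ⟨rfl, by linarith⟩⟩
  · have hU := linUnstable_warmD_completeP_barycentre h4 hα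
    exact ⟨iff_of_false hU.not_linStable (by omega), iff_of_false hU.not_criticalPt (by omega),
      iff_of_true hU (by omega),
      fun _ => ⟨⟨_, charpoly_warmD_completeP_barycentre hnv α⟩, hU⟩⟩

end
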